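/- arXiv:2505.11664 — 2 statements merged into one kernel-verified Lean document; each statement's English description precedes it below -/
import Mathlib

section
/- Let ℓ : ℝ^{n×m} → ℝ be μ-PL (i.e., (1/2)‖∇ℓ(W)‖_F² ≥ μ ℓ(W) for all W, assuming min ℓ = 0), and define L(W₁,W₂) = ℓ(W₁W₂ᵀ). Then at every point (W₁,W₂), the local PL inequality (1/2)‖∇L(W₁,W₂)‖_F² ≥ μ (σ_min(W₁)² + σ_min(W₂)²) · L(W₁,W₂) holds. -/
open Matrix

/-- Frobenius norm of a real matrix. -/
noncomputable def fro {a b : ℕ} (A : Matrix (Fin a) (Fin b) ℝ) : ℝ :=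
  Real.sqrt (∑ i, ∑ j, (A i j) ^ 2)

/-- Frobenius (trace) inner product of two real matrices. -/
noncomputable def ip {a b : ℕ} (A B : Matrix (Fin a) (Fin b) ℝ) : ℝ :=
  ∑ i, ∑ j, A i j * B i j

/-- Square of the largest singular value of `A`: largest eigenvalue of `Aᴴ * A`. -/
noncomputable def smaxSq {a b : ℕ} (A : Matrix (Fin a) (Fin b) ℝ) : ℝ :=
  ⨆ i, (Matrix.isHermitian_conjTranspose_mul_self A).eigenvalues i

/-- Square of the smallest singular value of `A` (as the smallest eigenvalue of `Aᴴ * A`;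
zero when `A` is rank-deficient as a map out of its column space). -/
noncomputable def sminSq {a b : ℕ} (A : Matrix (Fin a) (Fin b) ℝ) : ℝ :=
  ⨅ i, (Matrix.isHermitian_conjTranspose_mul_self A).eigenvalues i

/-- Square of the largest singular value via `A * Aᴴ`. -/
noncomputable def smaxSqR {a b : ℕ} (A : Matrix (Fin a) (Fin b) ℝ) : ℝ :=
  ⨆ i, (Matrix.isHermitian_mul_conjTranspose_self A).eigenvalues i

/-- Square of the smallest singular value via `A * Aᴴ` (the `min(a,b)`-th singular value
when `a ≤ b`). -/
noncomputable def sminSqR {a b : ℕ} (A : Matrix (Fin a) (Fin b) ℝ) : ℝ :=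
  ⨅ i, (Matrix.isHermitian_mul_conjTranspose_self A).eigenvalues i

/-- Largest singular value. -/
noncomputable def smax {a b : ℕ} (A : Matrix (Fin a) (Fin b) ℝ) : ℝ :=
  Real.sqrt (smaxSq A)

/-! Row by row, `‖g W‖_F² = ∑ᵢ gᵢ (W Wᵀ) gᵢᵀ ≥ λ_min(W Wᵀ) ‖g‖_F²`, applied to `(∇ℓ, W₂)` and to
`(∇ℓᵀ, W₁)`; adding the two bounds and using the PL inequality for `ℓ` gives the claim. -/

open scoped MatrixOrder

lemma Matrix.IsHermitian.iInf_eigenvalues_mul_dotProduct_self_le {ι : Type*} [Fintype ι]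
    [DecidableEq ι] {M : Matrix ι ι ℝ} (hM : M.IsHermitian) (x : ι → ℝ) :
    (⨅ i, hM.eigenvalues i) * (x ⬝ᵥ x) ≤ x ⬝ᵥ (M *ᵥ x) := by
  have hle : algebraMap ℝ (Matrix ι ι ℝ) (⨅ i, hM.eigenvalues i) ≤ M := by
    refine algebraMap_le_of_le_spectrum (fun y hy => ?_) hM.isSelfAdjoint
    rw [hM.spectrum_real_eq_range_eigenvalues] at hy
    obtain ⟨i, rfl⟩ := hy
    exact ciInf_le (Finite.bddBelow_range _) i
  simpa [Algebra.algebraMap_eq_smul_one, sub_mulVec, smul_mulVec, dotProduct_smul] using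
    (le_iff.mp hle).dotProduct_mulVec_nonneg x

lemma vecMul_dotProduct_vecMul_self {ι κ : Type*} [Fintype ι] [Fintype κ] (v : ι → ℝ)
    (W : Matrix ι κ ℝ) : (v ᵥ* W) ⬝ᵥ (v ᵥ* W) = v ⬝ᵥ ((W * Wᵀ) *ᵥ v) := by
  rw [← dotProduct_mulVec, ← mulVec_transpose, mulVec_mulVec]

lemma fro_sq {a b : ℕ} (A : Matrix (Fin a) (Fin b) ℝ) : fro A ^ 2 = ∑ i, A i ⬝ᵥ A i := by
  rw [fro, Real.sq_sqrt (by positivity)]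
  simp only [dotProduct, sq]

lemma fro_transpose {a b : ℕ} (A : Matrix (Fin a) (Fin b) ℝ) : fro Aᵀ = fro A := by
  rw [fro, fro, Finset.sum_comm]
  rfl

lemma sminSqR_nonneg {a b : ℕ} (A : Matrix (Fin a) (Fin b) ℝ) : 0 ≤ sminSqR A :=
  Real.iInf_nonneg (eigenvalues_self_mul_conjTranspose_nonneg A)

lemma sminSqR_mul_fro_sq_le {a b c : ℕ} (G : Matrix (Fin a) (Fin b) ℝ)
    (W : Matrix (Fin b) (Fin c) ℝ) : sminSqR W * fro G ^ 2 ≤ fro (G * W) ^ 2 := by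
  rw [fro_sq, fro_sq, Finset.mul_sum]
  refine Finset.sum_le_sum fun i _ => ?_
  rw [mul_apply_eq_vecMul, vecMul_dotProduct_vecMul_self, ← conjTranspose_eq_transpose_of_trivial]
  exact (isHermitian_mul_conjTranspose_self W).iInf_eigenvalues_mul_dotProduct_self_le (G i)

theorem stmt10_general (n m h : ℕ) (μ : ℝ)
    (ℓ : Matrix (Fin n) (Fin m) ℝ → ℝ)
    (g : Matrix (Fin n) (Fin m) ℝ → Matrix (Fin n) (Fin m) ℝ)
    (hPL : ∀ W, μ * ℓ W ≤ 1 / 2 * fro (g W) ^ 2)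
    (W₁ : Matrix (Fin n) (Fin h) ℝ) (W₂ : Matrix (Fin m) (Fin h) ℝ) :
    μ * (sminSqR W₁ + sminSqR W₂) * ℓ (W₁ * W₂ᵀ)
      ≤ 1 / 2 * (fro (g (W₁ * W₂ᵀ) * W₂) ^ 2 + fro ((g (W₁ * W₂ᵀ))ᵀ * W₁) ^ 2) := by
  set G := g (W₁ * W₂ᵀ)
  have hW₁ : sminSqR W₁ * fro G ^ 2 ≤ fro (Gᵀ * W₁) ^ 2 :=
    fro_transpose G ▸ sminSqR_mul_fro_sq_le Gᵀ W₁
  have hW₂ : sminSqR W₂ * fro G ^ 2 ≤ fro (G * W₂) ^ 2 := sminSqR_mul_fro_sq_le G W₂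
  calc μ * (sminSqR W₁ + sminSqR W₂) * ℓ (W₁ * W₂ᵀ)
      = (sminSqR W₁ + sminSqR W₂) * (μ * ℓ (W₁ * W₂ᵀ)) := by ring
    _ ≤ (sminSqR W₁ + sminSqR W₂) * (1 / 2 * fro G ^ 2) :=
        mul_le_mul_of_nonneg_left (hPL _) (add_nonneg (sminSqR_nonneg W₁) (sminSqR_nonneg W₂))
    _ ≤ 1 / 2 * (fro (G * W₂) ^ 2 + fro (Gᵀ * W₁) ^ 2) := by linarith

/-- If `ℓ` is `μ`-PL with `min ℓ = 0`, then `L(W₁,W₂) = ℓ(W₁W₂ᵀ)` satisfies the local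
PL inequality `(1/2)‖∇L‖_F² ≥ μ(σ_min(W₁)² + σ_min(W₂)²) L` at every point. -/
theorem stmt10 (n m h : ℕ) (μ : ℝ) (hμ : 0 < μ)
    (ℓ : Matrix (Fin n) (Fin m) ℝ → ℝ)
    (g : Matrix (Fin n) (Fin m) ℝ → Matrix (Fin n) (Fin m) ℝ)
    (hnonneg : ∀ W, 0 ≤ ℓ W)
    (hPL : ∀ W, μ * ℓ W ≤ 1 / 2 * fro (g W) ^ 2)
    (W₁ : Matrix (Fin n) (Fin h) ℝ) (W₂ : Matrix (Fin m) (Fin h) ℝ) :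
    μ * (sminSqR W₁ + sminSqR W₂) * ℓ (W₁ * W₂ᵀ)
      ≤ 1 / 2 * (fro (g (W₁ * W₂ᵀ) * W₂) ^ 2 + fro ((g (W₁ * W₂ᵀ))ᵀ * W₁) ^ 2) :=
  stmt10_general n m h μ ℓ g hPL W₁ W₂
end

section
/- Under the setting of the previous statement, if additionally ℓ is K-smooth with min ℓ = 0, then ‖D⁺ − D‖_F ≤ 2K η² (σ_max(W₁)² + σ_max(W₂)²) ℓ(W₁W₂ᵀ). -/
/-! The first-order terms of `D⁺ - D` cancel, since the imbalance is conserved by gradient flow: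
with `G = ∇ℓ(W₁W₂ᵀ)` one gets `D⁺ - D = η² ((G W₂)ᵀ (G W₂) - (Gᵀ W₁)ᵀ (Gᵀ W₁))`.
Each of the two terms has Frobenius norm at most `‖G Wᵢ‖² ≤ σ_max(Wᵢ)² ‖G‖²`, and the smoothness
inequality at the point `W₁W₂ᵀ - G / K`, where `ℓ ≥ 0`, gives `‖G‖² ≤ 2 K ℓ(W₁W₂ᵀ)`. -/

open Matrix

def imbalance {R ι κ τ : Type*} [CommRing R] [Fintype ι] [Fintype κ]
    (W₁ : Matrix ι τ R) (W₂ : Matrix κ τ R) : Matrix τ τ R :=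
  W₁ᵀ * W₁ - W₂ᵀ * W₂

lemma imbalance_gradientStep_sub {R ι κ τ : Type*} [CommRing R] [Fintype ι] [Fintype κ]
    (W₁ : Matrix ι τ R) (W₂ : Matrix κ τ R) (G : Matrix ι κ R) (η : R) :
    imbalance (W₁ - η • (G * W₂)) (W₂ - η • (Gᵀ * W₁)) - imbalance W₁ W₂
      = η ^ 2 • ((G * W₂)ᵀ * (G * W₂) - (Gᵀ * W₁)ᵀ * (Gᵀ * W₁)) := by
  simp only [imbalance, transpose_sub, transpose_smul, transpose_mul, transpose_transpose,
    Matrix.sub_mul, Matrix.mul_sub, Matrix.smul_mul, Matrix.mul_smul, smul_smul, smul_sub,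
    Matrix.mul_assoc, sq]
  abel

section SingularValue

open MatrixOrder

variable {a b : ℕ}

lemma smaxSq_nonneg (A : Matrix (Fin a) (Fin b) ℝ) : 0 ≤ smaxSq A :=
  Real.iSup_nonneg (eigenvalues_conjTranspose_mul_self_nonneg A)

lemma eigenvalue_le_smaxSq (A : Matrix (Fin a) (Fin b) ℝ) (i : Fin b) :
    (isHermitian_conjTranspose_mul_self A).eigenvalues i ≤ smaxSq A :=
  le_ciSup (Set.finite_range _).bddAbove i

lemma conjTranspose_mul_self_le_smaxSq (A : Matrix (Fin a) (Fin b) ℝ) :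
    Aᴴ * A ≤ algebraMap ℝ _ (smaxSq A) := by
  have hA := isHermitian_conjTranspose_mul_self A
  refine le_algebraMap_of_spectrum_le (fun x hx => ?_) hA.isSelfAdjoint
  rw [hA.spectrum_real_eq_range_eigenvalues] at hx
  obtain ⟨i, rfl⟩ := hx
  exact eigenvalue_le_smaxSq A i

lemma mulVec_dotProduct_self_le (A : Matrix (Fin a) (Fin b) ℝ) (x : Fin b → ℝ) :
    (A *ᵥ x) ⬝ᵥ (A *ᵥ x) ≤ smaxSq A * (x ⬝ᵥ x) := by
  have h := (conjTranspose_mul_self_le_smaxSq A).dotProduct_mulVec_nonneg x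
  rw [Algebra.algebraMap_eq_smul_one, sub_mulVec, smul_mulVec, one_mulVec, dotProduct_sub,
    dotProduct_smul, ← mulVec_mulVec, dotProduct_mulVec, vecMul_conjTranspose] at h
  simpa [sub_nonneg] using h

lemma vecMul_dotProduct_self_le (A : Matrix (Fin a) (Fin b) ℝ) (x : Fin a → ℝ) :
    (x ᵥ* A) ⬝ᵥ (x ᵥ* A) ≤ smaxSq A * (x ⬝ᵥ x) := by
  -- `‖x A‖² = ⟪x, A (x A)⟫ ≤ ‖x‖ ‖A (x A)‖ ≤ ‖x‖ √(smaxSq A) ‖x A‖`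
  set r := x ᵥ* A
  have hcs : (r ⬝ᵥ r) ^ 2 ≤ (x ⬝ᵥ x) * ((A *ᵥ r) ⬝ᵥ (A *ᵥ r)) := by
    rw [← dotProduct_mulVec]
    simpa only [dotProduct, sq] using Finset.sum_mul_sq_le_sq_mul_sq Finset.univ x (A *ᵥ r)
  have hAr := mulVec_dotProduct_self_le A r
  have hx : 0 ≤ x ⬝ᵥ x := by simpa using dotProduct_self_star_nonneg x
  by_contra! hlt
  have hr : 0 < r ⬝ᵥ r := (mul_nonneg (smaxSq_nonneg A) hx).trans_lt hlt
  nlinarith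

end SingularValue

section Frobenius

open scoped Matrix.Norms.Frobenius

variable {a b c : ℕ}

lemma fro_eq_norm (A : Matrix (Fin a) (Fin b) ℝ) : fro A = ‖A‖ := by
  rw [frobenius_norm_def, fro, Real.sqrt_eq_rpow]
  simp_rw [Real.norm_eq_abs, Real.rpow_two, sq_abs]

lemma fro_sq_eq_sum_dotProduct (A : Matrix (Fin a) (Fin b) ℝ) :
    fro A ^ 2 = ∑ i, A i ⬝ᵥ A i := by
  rw [fro, Real.sq_sqrt (by positivity)]
  simp only [dotProduct, sq]

lemma ip_smul_self (r : ℝ) (A : Matrix (Fin a) (Fin b) ℝ) : ip A (r • A) = r * fro A ^ 2 := by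
  simp only [fro_sq_eq_sum_dotProduct, ip, dotProduct, Matrix.smul_apply, smul_eq_mul,
    Finset.mul_sum]
  exact Finset.sum_congr rfl fun i _ => Finset.sum_congr rfl fun j _ => by ring

lemma norm_mul_sq_le_smaxSq_mul (B : Matrix (Fin c) (Fin a) ℝ) (A : Matrix (Fin a) (Fin b) ℝ) :
    ‖B * A‖ ^ 2 ≤ smaxSq A * ‖B‖ ^ 2 := by
  simp only [← fro_eq_norm, fro_sq_eq_sum_dotProduct, Finset.mul_sum]
  exact Finset.sum_le_sum fun i _ => vecMul_dotProduct_self_le A (B i)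

lemma norm_transpose_mul_self_le (A : Matrix (Fin a) (Fin b) ℝ) : ‖Aᵀ * A‖ ≤ ‖A‖ ^ 2 := by
  simpa [frobenius_norm_transpose, sq] using frobenius_norm_mul Aᵀ A

lemma fro_sq_le_of_smooth {K : ℝ} (hK : 0 < K) {ℓ : Matrix (Fin a) (Fin b) ℝ → ℝ}
    {V G : Matrix (Fin a) (Fin b) ℝ}
    (hsmooth : ∀ U, ℓ U ≤ ℓ V + ip G (U - V) + K / 2 * fro (U - V) ^ 2)
    (hnonneg : ∀ U, 0 ≤ ℓ U) :
    fro G ^ 2 ≤ 2 * K * ℓ V := by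
  have h := hsmooth (V + (-K⁻¹) • G)
  rw [add_sub_cancel_left, ip_smul_self, fro_eq_norm ((-K⁻¹) • G), norm_smul, ← fro_eq_norm,
    mul_pow, Real.norm_eq_abs, sq_abs] at h
  have hdescent : fro G ^ 2 / (2 * K) ≤ ℓ V := by
    have hrhs : ℓ V + -K⁻¹ * fro G ^ 2 + K / 2 * ((-K⁻¹) ^ 2 * fro G ^ 2)
        = ℓ V - fro G ^ 2 / (2 * K) := by
      field_simp
      ring
    linarith [hnonneg (V + (-K⁻¹) • G)]
  rwa [div_le_iff₀ (by positivity), mul_comm] at hdescent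

lemma fro_imbalance_gradientStep_sub_le {h : ℕ} (W₁ : Matrix (Fin a) (Fin h) ℝ)
    (W₂ : Matrix (Fin b) (Fin h) ℝ) (G : Matrix (Fin a) (Fin b) ℝ) (η : ℝ) :
    fro (imbalance (W₁ - η • (G * W₂)) (W₂ - η • (Gᵀ * W₁)) - imbalance W₁ W₂)
      ≤ η ^ 2 * (smaxSq W₁ + smaxSq W₂) * fro G ^ 2 := by
  rw [imbalance_gradientStep_sub, fro_eq_norm, fro_eq_norm, norm_smul, norm_pow,
    Real.norm_eq_abs, sq_abs]
  have h₁ := norm_mul_sq_le_smaxSq_mul G W₂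
  have h₂ := norm_mul_sq_le_smaxSq_mul Gᵀ W₁
  rw [frobenius_norm_transpose] at h₂
  calc η ^ 2 * ‖(G * W₂)ᵀ * (G * W₂) - (Gᵀ * W₁)ᵀ * (Gᵀ * W₁)‖
      ≤ η ^ 2 * (‖G * W₂‖ ^ 2 + ‖Gᵀ * W₁‖ ^ 2) := by
        gcongr
        exact (norm_sub_le _ _).trans
          (add_le_add (norm_transpose_mul_self_le _) (norm_transpose_mul_self_le _))
    _ ≤ η ^ 2 * (smaxSq W₂ * ‖G‖ ^ 2 + smaxSq W₁ * ‖G‖ ^ 2) := by gcongr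
    _ = η ^ 2 * (smaxSq W₁ + smaxSq W₂) * ‖G‖ ^ 2 := by ring

end Frobenius

/-- If additionally `ℓ` is `K`-smooth with `min ℓ = 0`, the imbalance change after one
GD step satisfies `‖D⁺ − D‖_F ≤ 2Kη²(σ_max(W₁)² + σ_max(W₂)²) ℓ(W₁W₂ᵀ)`. -/
theorem stmt12 (n m h : ℕ) (η K : ℝ) (hK : 0 < K)
    (ℓ : Matrix (Fin n) (Fin m) ℝ → ℝ)
    (g : Matrix (Fin n) (Fin m) ℝ → Matrix (Fin n) (Fin m) ℝ)
    (hsmooth : ∀ U V, ℓ U ≤ ℓ V + ip (g V) (U - V) + K / 2 * fro (U - V) ^ 2)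
    (hnonneg : ∀ W, 0 ≤ ℓ W)
    (W₁ : Matrix (Fin n) (Fin h) ℝ) (W₂ : Matrix (Fin m) (Fin h) ℝ)
    (G : Matrix (Fin n) (Fin m) ℝ) (hG : G = g (W₁ * W₂ᵀ))
    (W₁' : Matrix (Fin n) (Fin h) ℝ) (hW₁' : W₁' = W₁ - η • (G * W₂))
    (W₂' : Matrix (Fin m) (Fin h) ℝ) (hW₂' : W₂' = W₂ - η • (Gᵀ * W₁)) :
    fro ((W₁'ᵀ * W₁' - W₂'ᵀ * W₂') - (W₁ᵀ * W₁ - W₂ᵀ * W₂))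
      ≤ 2 * K * η ^ 2 * (smaxSq W₁ + smaxSq W₂) * ℓ (W₁ * W₂ᵀ) := by
  subst hW₁' hW₂'
  have hgrad : fro G ^ 2 ≤ 2 * K * ℓ (W₁ * W₂ᵀ) :=
    hG ▸ fro_sq_le_of_smooth hK (fun U => hsmooth U _) hnonneg
  have hweight : 0 ≤ η ^ 2 * (smaxSq W₁ + smaxSq W₂) :=
    mul_nonneg (sq_nonneg η) (add_nonneg (smaxSq_nonneg W₁) (smaxSq_nonneg W₂))
  calc fro (imbalance (W₁ - η • (G * W₂)) (W₂ - η • (Gᵀ * W₁)) - imbalance W₁ W₂)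
      ≤ η ^ 2 * (smaxSq W₁ + smaxSq W₂) * fro G ^ 2 := fro_imbalance_gradientStep_sub_le W₁ W₂ G η
    _ ≤ η ^ 2 * (smaxSq W₁ + smaxSq W₂) * (2 * K * ℓ (W₁ * W₂ᵀ)) := by gcongr
    _ = 2 * K * η ^ 2 * (smaxSq W₁ + smaxSq W₂) * ℓ (W₁ * W₂ᵀ) := by ring
end
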